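/- arXiv:2101.10139 — 2 statements merged into one kernel-verified Lean document; each statement's English description precedes it below -/
import Mathlib

section
/- Let δ > 0 and set b₁ = k₁ + 2 h m k₂ δ^{μ−1}, b₂ = (m k₂ + w₁ + h w₂)δ^{μ−1}, and b = max{b₁, b₂}. Then for every continuous φ : [−h,0] → E with ‖φ‖_h ≤ δ one has v(φ) ≤ b·(‖φ(0)‖^γ + ∫_{−h}^{0} ‖φ(θ)‖^γ dθ). -/
/-!
Bound the three terms of `v(φ)` separately, using `‖φ θ‖ ≤ δ` on `[-h, 0]`. The whole argument rests
on `r ^ μ ≤ δ ^ (μ - 1) * r` for `0 ≤ r ≤ δ`, which trades the surplus exponent `μ - 1` for the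
factor `δ ^ (μ - 1)`. In the cross term `⟪∇V(φ 0), ∫ f⟫` this leaves the integrand
`δ ^ (μ - 1) * ‖φ 0‖ ^ (γ - 1) * (‖φ 0‖ + ‖φ θ‖)`, and `a ^ (γ - 1) * c ≤ a ^ γ + c ^ γ` splits it between the
point value `‖φ 0‖ ^ γ` and the integrand `‖φ θ‖ ^ γ`.
-/

open Real Set RealInnerProductSpace

namespace Real

variable {a c δ γ μ : ℝ}

lemma rpow_sub_one_mul_self (ha : 0 ≤ a) (hγ : γ ≠ 0) : a ^ (γ - 1) * a = a ^ γ := by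
  simpa using (rpow_add' ha (by simpa using hγ : γ - 1 + 1 ≠ 0)).symm

lemma rpow_le_rpow_sub_one_mul (ha : 0 ≤ a) (haδ : a ≤ δ) (hμ : 1 ≤ μ) :
    a ^ μ ≤ δ ^ (μ - 1) * a := by
  rw [← rpow_sub_one_mul_self ha (by linarith)]
  exact mul_le_mul_of_nonneg_right (rpow_le_rpow ha haδ (by linarith)) ha

lemma rpow_add_sub_one_le (ha : 0 ≤ a) (haδ : a ≤ δ) (hγ : 0 < γ) (hμ : 1 ≤ μ) :
    a ^ (γ + μ - 1) ≤ δ ^ (μ - 1) * a ^ γ := by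
  rw [add_sub_assoc, rpow_add' ha (by linarith), mul_comm]
  exact mul_le_mul_of_nonneg_right (rpow_le_rpow ha haδ (by linarith)) (rpow_nonneg ha _)

lemma rpow_sub_one_mul_le_add_rpow (ha : 0 ≤ a) (hc : 0 ≤ c) (hγ : 1 ≤ γ) :
    a ^ (γ - 1) * c ≤ a ^ γ + c ^ γ := by
  rcases le_total a c with hac | hca
  · calc a ^ (γ - 1) * c ≤ c ^ (γ - 1) * c := by gcongr
      _ = c ^ γ := rpow_sub_one_mul_self hc (by linarith)
      _ ≤ a ^ γ + c ^ γ := le_add_of_nonneg_left (rpow_nonneg ha _)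
  · calc a ^ (γ - 1) * c ≤ a ^ (γ - 1) * a := by gcongr
      _ = a ^ γ := rpow_sub_one_mul_self ha (by linarith)
      _ ≤ a ^ γ + c ^ γ := le_add_of_nonneg_right (rpow_nonneg hc _)

lemma rpow_sub_one_mul_add_rpow_le (ha : 0 ≤ a) (hc : 0 ≤ c) (haδ : a ≤ δ) (hcδ : c ≤ δ)
    (hγ : 1 ≤ γ) (hμ : 1 ≤ μ) :
    a ^ (γ - 1) * (a ^ μ + c ^ μ) ≤ δ ^ (μ - 1) * (2 * a ^ γ + c ^ γ) := by
  have hsplit : a ^ (γ - 1) * (a + c) ≤ 2 * a ^ γ + c ^ γ := by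
    have := rpow_sub_one_mul_le_add_rpow ha hc hγ
    rw [mul_add, rpow_sub_one_mul_self ha (by linarith)]
    linarith
  calc a ^ (γ - 1) * (a ^ μ + c ^ μ)
      ≤ a ^ (γ - 1) * (δ ^ (μ - 1) * a + δ ^ (μ - 1) * c) := by
        gcongr
        exacts [rpow_le_rpow_sub_one_mul ha haδ hμ, rpow_le_rpow_sub_one_mul hc hcδ hμ]
    _ = δ ^ (μ - 1) * (a ^ (γ - 1) * (a + c)) := by ring
    _ ≤ δ ^ (μ - 1) * (2 * a ^ γ + c ^ γ) :=
        mul_le_mul_of_nonneg_left hsplit (rpow_nonneg (ha.trans haδ) _)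

end Real

namespace intervalIntegral

open MeasureTheory

/-- Only `g` must be integrable: if `f` is not, its integral is `0`. -/
lemma integral_mono_on_of_nonneg {μ : Measure ℝ} {f g : ℝ → ℝ} {a b : ℝ} (hab : a ≤ b)
    (hg : IntervalIntegrable g μ a b) (hf : ∀ x ∈ Icc a b, 0 ≤ f x)
    (hfg : ∀ x ∈ Icc a b, f x ≤ g x) : ∫ x in a..b, f x ∂μ ≤ ∫ x in a..b, g x ∂μ := by
  rw [integral_of_le hab, integral_of_le hab]
  have hmem : ∀ᵐ x ∂μ.restrict (Ioc a b), x ∈ Icc a b :=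
    (ae_restrict_mem measurableSet_Ioc).mono fun x hx => Ioc_subset_Icc_self hx
  exact integral_mono_of_nonneg (hmem.mono hf) hg.1 (hmem.mono hfg)

end intervalIntegral

section Delay

open intervalIntegral

variable {E F : Type*} [NormedAddCommGroup E] [NormedAddCommGroup F] [InnerProductSpace ℝ F]
  {φ : ℝ → E} {a b h δ γ μ : ℝ}

lemma norm_le_of_iSup_norm_le (hφ : ContinuousOn φ (Icc a b))
    (hsup : (⨆ θ : Icc a b, ‖φ θ‖) ≤ δ) {θ : ℝ} (hθ : θ ∈ Icc a b) : ‖φ θ‖ ≤ δ :=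
  have hbdd : BddAbove (range fun θ : Icc a b => ‖φ θ‖) :=
    (isCompact_range (continuousOn_iff_continuous_domRestrict.mp hφ).norm).bddAbove
  (le_ciSup hbdd ⟨θ, hθ⟩).trans hsup

lemma intervalIntegrable_norm_rpow (hab : a ≤ b) (hφ : ContinuousOn φ (Icc a b)) (hγ : 0 ≤ γ) :
    IntervalIntegrable (fun θ => ‖φ θ‖ ^ γ) MeasureTheory.volume a b :=
  (hφ.norm.rpow_const fun _ _ => Or.inr hγ).intervalIntegrable_of_Icc hab

lemma inner_integral_le_of_norm_le {ψ : ℝ → F} {g : F} {k m : ℝ} (hh : 0 ≤ h) (hk : 0 ≤ k)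
    (hm : 0 ≤ m) (hγ : 1 ≤ γ) (hμ : 1 ≤ μ) (hφ : ContinuousOn φ (Icc (-h) 0))
    (hφδ : ∀ θ ∈ Icc (-h) 0, ‖φ θ‖ ≤ δ) (hg : ‖g‖ ≤ k * ‖φ 0‖ ^ (γ - 1))
    (hψ : ∀ θ ∈ Icc (-h) 0, ‖ψ θ‖ ≤ m * (‖φ 0‖ ^ μ + ‖φ θ‖ ^ μ)) :
    ⟪g, ∫ θ in (-h)..0, ψ θ⟫ ≤
      m * k * δ ^ (μ - 1) * (2 * h * ‖φ 0‖ ^ γ + ∫ θ in (-h)..0, ‖φ θ‖ ^ γ) := by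
  have hle : -h ≤ 0 := by linarith
  have hφ0 : ‖φ 0‖ ≤ δ := hφδ 0 ⟨hle, le_rfl⟩
  have hint := intervalIntegrable_norm_rpow hle hφ (γ := γ) (by linarith)
  have hpoint : ∀ θ ∈ Icc (-h) 0, k * ‖φ 0‖ ^ (γ - 1) * ‖ψ θ‖ ≤
      m * k * δ ^ (μ - 1) * (2 * ‖φ 0‖ ^ γ + ‖φ θ‖ ^ γ) := fun θ hθ =>
    calc k * ‖φ 0‖ ^ (γ - 1) * ‖ψ θ‖
        ≤ k * ‖φ 0‖ ^ (γ - 1) * (m * (‖φ 0‖ ^ μ + ‖φ θ‖ ^ μ)) := by gcongr; exact hψ θ hθ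
      _ = m * k * (‖φ 0‖ ^ (γ - 1) * (‖φ 0‖ ^ μ + ‖φ θ‖ ^ μ)) := by ring
      _ ≤ m * k * (δ ^ (μ - 1) * (2 * ‖φ 0‖ ^ γ + ‖φ θ‖ ^ γ)) :=
          mul_le_mul_of_nonneg_left (rpow_sub_one_mul_add_rpow_le (norm_nonneg _) (norm_nonneg _)
            hφ0 (hφδ θ hθ) hγ hμ) (by positivity)
      _ = m * k * δ ^ (μ - 1) * (2 * ‖φ 0‖ ^ γ + ‖φ θ‖ ^ γ) := by ring
  calc ⟪g, ∫ θ in (-h)..0, ψ θ⟫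
      ≤ ‖g‖ * ‖∫ θ in (-h)..0, ψ θ‖ := real_inner_le_norm _ _
    _ ≤ k * ‖φ 0‖ ^ (γ - 1) * ∫ θ in (-h)..0, ‖ψ θ‖ :=
        mul_le_mul hg (norm_integral_le_integral_norm hle) (norm_nonneg _)
          ((norm_nonneg g).trans hg)
    _ = ∫ θ in (-h)..0, k * ‖φ 0‖ ^ (γ - 1) * ‖ψ θ‖ := (integral_const_mul _ _).symm
    _ ≤ ∫ θ in (-h)..0, m * k * δ ^ (μ - 1) * (2 * ‖φ 0‖ ^ γ + ‖φ θ‖ ^ γ) :=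
        integral_mono_on_of_nonneg hle ((intervalIntegrable_const.add hint).const_mul _)
          (fun θ _ => by positivity) hpoint
    _ = m * k * δ ^ (μ - 1) * (2 * h * ‖φ 0‖ ^ γ + ∫ θ in (-h)..0, ‖φ θ‖ ^ γ) := by
        rw [integral_const_mul, integral_add intervalIntegrable_const hint, integral_const,
          smul_eq_mul]
        ring

lemma integral_weight_mul_norm_rpow_le {w₁ w₂ : ℝ} (hh : 0 ≤ h) (hw₁ : 0 ≤ w₁) (hw₂ : 0 ≤ w₂)
    (hγ : 0 < γ) (hμ : 1 ≤ μ) (hφ : ContinuousOn φ (Icc (-h) 0))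
    (hφδ : ∀ θ ∈ Icc (-h) 0, ‖φ θ‖ ≤ δ) :
    ∫ θ in (-h)..0, (w₁ + (h + θ) * w₂) * ‖φ θ‖ ^ (γ + μ - 1) ≤
      (w₁ + h * w₂) * δ ^ (μ - 1) * ∫ θ in (-h)..0, ‖φ θ‖ ^ γ := by
  have hle : -h ≤ 0 := by linarith
  rw [← integral_const_mul]
  refine integral_mono_on_of_nonneg hle
    ((intervalIntegrable_norm_rpow hle hφ hγ.le).const_mul _) (fun θ hθ => ?_) (fun θ hθ => ?_)
  · have : 0 ≤ h + θ := by linarith [hθ.1]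
    positivity
  · have hδ : 0 ≤ δ := (norm_nonneg _).trans (hφδ θ hθ)
    calc (w₁ + (h + θ) * w₂) * ‖φ θ‖ ^ (γ + μ - 1)
        ≤ (w₁ + h * w₂) * (δ ^ (μ - 1) * ‖φ θ‖ ^ γ) := by
          gcongr
          · linarith [hθ.2]
          · exact rpow_add_sub_one_le (norm_nonneg _) (hφδ θ hθ) hγ hμ
      _ = (w₁ + h * w₂) * δ ^ (μ - 1) * ‖φ θ‖ ^ γ := by ring

end Delay

theorem functional_upper_bound_general
    {n : ℕ}
    (h μ : ℝ) (hh : 0 < h) (hμ : 1 < μ)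
    (f : EuclideanSpace ℝ (Fin n) × EuclideanSpace ℝ (Fin n) → EuclideanSpace ℝ (Fin n))
    (m : ℝ) (hm : 0 < m)
    (hfb : ∀ x y : EuclideanSpace ℝ (Fin n), ‖f (x, y)‖ ≤ m * (‖x‖ ^ μ + ‖y‖ ^ μ))
    (γ : ℝ) (hγ : 2 ≤ γ)
    (V : EuclideanSpace ℝ (Fin n) → ℝ)
    (k₁ k₂ : ℝ) (hk₂ : 0 < k₂)
    (hVub : ∀ x : EuclideanSpace ℝ (Fin n), V x ≤ k₁ * ‖x‖ ^ γ)
    (hgrad : ∀ x : EuclideanSpace ℝ (Fin n), ‖gradient V x‖ ≤ k₂ * ‖x‖ ^ (γ - 1))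
    (w₁ w₂ : ℝ) (hw₁ : 0 < w₁) (hw₂ : 0 < w₂)
    (δ b₁ b₂ b : ℝ)
    (hb₁ : b₁ = k₁ + 2 * h * m * k₂ * δ ^ (μ - 1))
    (hb₂ : b₂ = (m * k₂ + w₁ + h * w₂) * δ ^ (μ - 1))
    (hb : b = max b₁ b₂) :
    ∀ φ : ℝ → EuclideanSpace ℝ (Fin n), ContinuousOn φ (Set.Icc (-h) 0) →
      (⨆ θ : Set.Icc (-h) (0:ℝ), ‖φ θ.1‖) ≤ δ →
      V (φ 0) + ⟪gradient V (φ 0), ∫ θ in (-h)..0, f (φ 0, φ θ)⟫ +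
          ∫ θ in (-h)..0, (w₁ + (h + θ) * w₂) * ‖φ θ‖ ^ (γ + μ - 1) ≤
        b * (‖φ 0‖ ^ γ + ∫ θ in (-h)..0, ‖φ θ‖ ^ γ) := by
  intro φ hφ hsup
  have hφδ : ∀ θ ∈ Icc (-h) 0, ‖φ θ‖ ≤ δ := fun θ hθ => norm_le_of_iSup_norm_le hφ hsup hθ
  have hA : 0 ≤ ‖φ 0‖ ^ γ := by positivity
  have hI : 0 ≤ ∫ θ in (-h)..0, ‖φ θ‖ ^ γ :=
    intervalIntegral.integral_nonneg (by linarith) fun θ _ => by positivity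
  have hcross := inner_integral_le_of_norm_le (ψ := fun θ => f (φ 0, φ θ)) hh.le hk₂.le hm.le
    (by linarith) hμ.le hφ hφδ (hgrad (φ 0)) fun θ _ => hfb _ _
  have hweight := integral_weight_mul_norm_rpow_le (γ := γ) hh.le hw₁.le hw₂.le (by linarith) hμ.le
    hφ hφδ
  calc _ ≤ k₁ * ‖φ 0‖ ^ γ
          + m * k₂ * δ ^ (μ - 1) * (2 * h * ‖φ 0‖ ^ γ + ∫ θ in (-h)..0, ‖φ θ‖ ^ γ)
          + (w₁ + h * w₂) * δ ^ (μ - 1) * ∫ θ in (-h)..0, ‖φ θ‖ ^ γ := by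
        gcongr
        exact hVub _
    _ = b₁ * ‖φ 0‖ ^ γ + b₂ * ∫ θ in (-h)..0, ‖φ θ‖ ^ γ := by rw [hb₁, hb₂]; ring
    _ ≤ b * (‖φ 0‖ ^ γ + ∫ θ in (-h)..0, ‖φ θ‖ ^ γ) := by
        rw [hb, mul_add]
        gcongr
        exacts [le_max_left _ _, le_max_right _ _]

/-- Lemma 2: upper bound for the Lyapunov–Krasovskii functional `v` on the ball `‖φ‖_h ≤ δ`. -/
theorem functional_upper_bound
    {n : ℕ} (hn : 1 ≤ n)
    (h μ : ℝ) (hh : 0 < h) (hμ : 1 < μ)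
    (f : EuclideanSpace ℝ (Fin n) × EuclideanSpace ℝ (Fin n) → EuclideanSpace ℝ (Fin n))
    (hf : Continuous f)
    (m : ℝ) (hm : 0 < m)
    (hfb : ∀ x y : EuclideanSpace ℝ (Fin n), ‖f (x, y)‖ ≤ m * (‖x‖ ^ μ + ‖y‖ ^ μ))
    (γ : ℝ) (hγ : 2 ≤ γ)
    (V : EuclideanSpace ℝ (Fin n) → ℝ) (hV : ContDiff ℝ 1 V)
    (k₁ k₂ : ℝ) (hk₁ : 0 < k₁) (hk₂ : 0 < k₂)
    (hVub : ∀ x : EuclideanSpace ℝ (Fin n), V x ≤ k₁ * ‖x‖ ^ γ)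
    (hgrad : ∀ x : EuclideanSpace ℝ (Fin n), ‖gradient V x‖ ≤ k₂ * ‖x‖ ^ (γ - 1))
    (w₁ w₂ : ℝ) (hw₁ : 0 < w₁) (hw₂ : 0 < w₂)
    (δ b₁ b₂ b : ℝ) (hδ : 0 < δ)
    (hb₁ : b₁ = k₁ + 2 * h * m * k₂ * δ ^ (μ - 1))
    (hb₂ : b₂ = (m * k₂ + w₁ + h * w₂) * δ ^ (μ - 1))
    (hb : b = max b₁ b₂) :
    ∀ φ : ℝ → EuclideanSpace ℝ (Fin n), ContinuousOn φ (Set.Icc (-h) 0) →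
      (⨆ θ : Set.Icc (-h) (0:ℝ), ‖φ θ.1‖) ≤ δ →
      V (φ 0) + ⟪gradient V (φ 0), ∫ θ in (-h)..0, f (φ 0, φ θ)⟫ +
          ∫ θ in (-h)..0, (w₁ + (h + θ) * w₂) * ‖φ θ‖ ^ (γ + μ - 1) ≤
        b * (‖φ 0‖ ^ γ + ∫ θ in (-h)..0, ‖φ θ‖ ^ γ) :=
  functional_upper_bound_general h μ hh hμ f m hm hfb γ hγ V k₁ k₂ hk₂ hVub hgrad w₁ w₂ hw₁ hw₂ δ b₁
    b₂ b hb₁ hb₂ hb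
end

section
/- Let s > 0, set K = (1 + (μ−1)·m·h·s^{μ−1})^{1/(μ−1)}, and let Δ > 0 satisfy Δ + m·h·Δ^μ = s/K. Then every solution x of the delay system with initial function φ satisfying ‖φ‖_h < Δ obeys ‖x(t)‖ ≤ K·(‖φ‖_h + m·h·‖φ‖_h^μ) for all t ∈ [0,h]. -/
/-!
On `[0, h]` the delayed argument is a value of `φ`, so `‖x'‖ ≤ m (‖x‖ ^ μ + N ^ μ)`, an ordinary
differential inequality. For `ρ ∈ (N, Δ)` let `v` solve `v' = m v ^ μ`, `v 0 = ρ + m h ρ ^ μ`.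
Then `B t = v t - m ρ ^ μ (h - t)` is a strict upper fence for `‖x‖`: `B 0 = ρ > ‖x 0‖`, and
`B' = m v ^ μ + m ρ ^ μ` beats the bound on `‖x'‖` wherever `‖x‖ = B ≤ v`. Hence `‖x t‖ ≤ v h`.
The choice of `Δ` makes `(ρ + m h ρ ^ μ) K < s`, which keeps `v` finite on `[0, h]` and gives
`v h ≤ K (ρ + m h ρ ^ μ)`; finally let `ρ → N`.
-/

open Real Set Filter Topology

section

variable {E : Type*} [NormedAddCommGroup E] [NormedSpace ℝ E]

theorem norm_le_of_norm_deriv_lt_deriv_boundary_Ioo {f f' : ℝ → E} {B B' : ℝ → ℝ} {a b : ℝ}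
    (hf : ContinuousOn f (Icc a b)) (hf' : ∀ t ∈ Ioo a b, HasDerivAt f (f' t) t)
    (hB : ContinuousOn B (Icc a b)) (hB' : ∀ t ∈ Ioo a b, HasDerivAt B (B' t) t)
    (ha : ‖f a‖ < B a) (bound : ∀ t ∈ Ioo a b, ‖f t‖ = B t → ‖f' t‖ < B' t) :
    ∀ t ∈ Icc a b, ‖f t‖ ≤ B t := by
  rintro t ⟨hat, htb⟩
  rcases hat.eq_or_lt with rfl | hat
  · exact ha.le
  have hab : a ∈ Icc a b := ⟨le_rfl, hat.le.trans htb⟩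
  have hnear : ∀ᶠ δ in 𝓝[Icc a b] a, ‖f δ‖ < B δ :=
    ((hB a hab).sub (hf a hab).norm).eventually (eventually_gt_nhds (sub_pos.2 ha))
      |>.mono fun _ => sub_pos.1
  have := left_nhdsWithin_Ioo_neBot hat
  obtain ⟨δ, hδ, ⟨haδ, hδt⟩⟩ :=
    ((hnear.filter_mono (nhdsWithin_mono a (Ioo_subset_Icc_self.trans
      (Icc_subset_Icc_right htb)))).and self_mem_nhdsWithin).exists
  have hsub : Icc δ b ⊆ Icc a b := Icc_subset_Icc_left haδ.le
  have hsub' : Ico δ b ⊆ Ioo a b := fun τ hτ => ⟨haδ.trans_le hτ.1, hτ.2⟩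
  exact image_norm_le_of_norm_deriv_right_lt_deriv_boundary' (hf.mono hsub)
    (fun τ hτ => (hf' τ (hsub' hτ)).hasDerivWithinAt) hδ.le (hB.mono hsub)
    (fun τ hτ => (hB' τ (hsub' hτ)).hasDerivWithinAt) (fun τ hτ => bound τ (hsub' hτ))
    ⟨hδt.le, htb⟩

/-- The solution of `v' = m v ^ μ`, `v 0 = a`; it blows up at `t = 1 / ((μ - 1) m a ^ (μ - 1))`. -/
noncomputable def blowupSolution (m μ a t : ℝ) : ℝ :=
  a * (1 - (μ - 1) * m * a ^ (μ - 1) * t) ^ (-(1 / (μ - 1)))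

@[simp]
theorem blowupSolution_zero (m μ a : ℝ) : blowupSolution m μ a 0 = a := by
  simp [blowupSolution]

theorem hasDerivAt_blowupSolution {m μ a t : ℝ} (hμ : μ ≠ 1) (ha : 0 < a)
    (ht : 0 < 1 - (μ - 1) * m * a ^ (μ - 1) * t) :
    HasDerivAt (blowupSolution m μ a) (m * blowupSolution m μ a t ^ μ) t := by
  have hμ' : μ - 1 ≠ 0 := sub_ne_zero.2 hμ
  set c := (μ - 1) * m * a ^ (μ - 1)
  have hbase : HasDerivAt (fun τ => 1 - c * τ) (-c) t := by
    simpa using ((hasDerivAt_id t).const_mul c).const_sub 1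
  refine ((hbase.rpow_const (p := -(1 / (μ - 1))) (Or.inl ht.ne')).const_mul a).congr_deriv ?_
  have hexp : -(1 / (μ - 1)) * μ = -(1 / (μ - 1)) - 1 := by field_simp; ring
  rw [blowupSolution, mul_rpow ha.le (rpow_nonneg ht.le _), ← rpow_mul ht.le, hexp]
  simp only [c, rpow_sub_one ha.ne' μ]
  field_simp

theorem blowupSolution_le_blowupSolution {m μ a t t' : ℝ} (hμ : 1 < μ) (hm : 0 ≤ m)
    (ha : 0 ≤ a) (htt' : t ≤ t') (ht' : 0 < 1 - (μ - 1) * m * a ^ (μ - 1) * t') :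
    blowupSolution m μ a t ≤ blowupSolution m μ a t' := by
  have hc : 0 ≤ (μ - 1) * m * a ^ (μ - 1) :=
    mul_nonneg (mul_nonneg (sub_nonneg.2 hμ.le) hm) (rpow_nonneg ha _)
  have hexp : -(1 / (μ - 1)) ≤ 0 := neg_nonpos.2 (one_div_nonneg.2 (sub_nonneg.2 hμ.le))
  exact mul_le_mul_of_nonneg_left
    (rpow_le_rpow_of_nonpos ht' (by nlinarith [mul_le_mul_of_nonneg_left htt' hc]) hexp) ha

theorem blowupSolution_le_of_mul_le {m μ h a s : ℝ} (hμ : 1 < μ) (hm : 0 ≤ m) (hh : 0 ≤ h)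
    (ha : 0 < a) (hs : 0 < s)
    (haK : a * (1 + (μ - 1) * m * h * s ^ (μ - 1)) ^ (1 / (μ - 1)) ≤ s) :
    0 < 1 - (μ - 1) * m * a ^ (μ - 1) * h ∧
      blowupSolution m μ a h ≤ (1 + (μ - 1) * m * h * s ^ (μ - 1)) ^ (1 / (μ - 1)) * a := by
  have hμ1 : 0 < μ - 1 := sub_pos.2 hμ
  set q := (μ - 1) * m * h
  set P := 1 + q * s ^ (μ - 1)
  have hq : 0 ≤ q := by positivity
  have hP : 0 < P := by positivity
  have hPK : (P ^ (1 / (μ - 1))) ^ (μ - 1) = P := by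
    rw [← rpow_mul hP.le, one_div_mul_cancel hμ1.ne', rpow_one]
  have hAP : a ^ (μ - 1) * P ≤ s ^ (μ - 1) := by
    rw [← hPK, ← mul_rpow ha.le (rpow_nonneg hP.le _)]
    exact rpow_le_rpow (by positivity) haK hμ1.le
  have hc : (μ - 1) * m * a ^ (μ - 1) * h = q * a ^ (μ - 1) := by ring
  -- `(1 - q A) P = P - q (A P) ≥ P - q S = 1`
  have hprod : 1 ≤ (1 - q * a ^ (μ - 1)) * P := by
    nlinarith [mul_le_mul_of_nonneg_left hAP hq]
  have hpos : 0 < 1 - q * a ^ (μ - 1) := pos_of_mul_pos_left (one_pos.trans_le hprod) hP.le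
  refine ⟨hc ▸ hpos, ?_⟩
  rw [blowupSolution, hc, mul_comm _ a, rpow_neg hpos.le, ← inv_rpow hpos.le]
  refine mul_le_mul_of_nonneg_left (rpow_le_rpow (by positivity) ?_ (by positivity)) ha.le
  rwa [inv_le_iff_one_le_mul₀ hpos, mul_comm]

theorem norm_le_blowupSolution_of_norm_deriv_le {x x' : ℝ → E} {m μ h r ρ : ℝ}
    (hμ : 1 < μ) (hm : 0 < m) (hrρ : r < ρ)
    (hblow : 0 < 1 - (μ - 1) * m * (ρ + m * h * ρ ^ μ) ^ (μ - 1) * h)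
    (hxc : ContinuousOn x (Icc 0 h)) (hxd : ∀ t ∈ Ioo 0 h, HasDerivAt x (x' t) t)
    (hx0 : ‖x 0‖ ≤ r) (hx' : ∀ t ∈ Ioo 0 h, ‖x' t‖ ≤ m * (‖x t‖ ^ μ + r ^ μ)) :
    ∀ t ∈ Icc 0 h, ‖x t‖ ≤ blowupSolution m μ (ρ + m * h * ρ ^ μ) h := by
  intro t ht
  have hh : 0 ≤ h := ht.1.trans ht.2
  have hr : 0 ≤ r := (norm_nonneg _).trans hx0
  have hρ : 0 < ρ := hr.trans_lt hrρ
  set a := ρ + m * h * ρ ^ μ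
  have ha : 0 < a := by positivity
  set v := blowupSolution m μ a
  set B : ℝ → ℝ := fun τ => v τ - m * ρ ^ μ * (h - τ)
  have hc : 0 ≤ (μ - 1) * m * a ^ (μ - 1) := by
    have := rpow_nonneg ha.le (μ - 1); have := sub_pos.2 hμ; positivity
  have hpos : ∀ τ ∈ Icc 0 h, 0 < 1 - (μ - 1) * m * a ^ (μ - 1) * τ := fun τ hτ =>
    hblow.trans_le (by nlinarith [mul_le_mul_of_nonneg_left hτ.2 hc])
  have hB : ∀ τ ∈ Icc 0 h, HasDerivAt B (m * v τ ^ μ + m * ρ ^ μ) τ := fun τ hτ =>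
    ((hasDerivAt_blowupSolution hμ.ne' ha (hpos τ hτ)).sub
      (((hasDerivAt_id τ).const_sub h).const_mul (m * ρ ^ μ))).congr_deriv (by simp [v])
  have hBv : ∀ τ ∈ Icc 0 h, B τ ≤ v τ := fun τ hτ =>
    sub_le_self _ (mul_nonneg (by positivity) (sub_nonneg.2 hτ.2))
  have hB0 : B 0 = ρ := by simp only [B, v, blowupSolution_zero, a]; ring
  refine (norm_le_of_norm_deriv_lt_deriv_boundary_Ioo hxc hxd
    (fun τ hτ => (hB τ hτ).continuousAt.continuousWithinAt)
    (fun τ hτ => hB τ (Ioo_subset_Icc_self hτ)) (hB0 ▸ hx0.trans_lt hrρ) ?_ t ht).trans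
    ((hBv t ht).trans (blowupSolution_le_blowupSolution hμ hm.le ha.le ht.2 (hpos h ⟨hh, le_rfl⟩)))
  intro τ hτ hcontact
  have hμ0 : 0 < μ := one_pos.trans hμ
  calc ‖x' τ‖ ≤ m * (‖x τ‖ ^ μ + r ^ μ) := hx' τ hτ
    _ < m * (v τ ^ μ + ρ ^ μ) := mul_lt_mul_of_pos_left (add_lt_add_of_le_of_lt
        (rpow_le_rpow (norm_nonneg _) (hcontact ▸ hBv τ (Ioo_subset_Icc_self hτ)) hμ0.le)
        (rpow_lt_rpow hr hrρ hμ0)) hm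
    _ = m * v τ ^ μ + m * ρ ^ μ := by ring

theorem norm_le_mul_of_norm_deriv_le {x x' : ℝ → E} {m μ h r s K Δ : ℝ}
    (hμ : 1 < μ) (hm : 0 < m) (hs : 0 < s)
    (hK : K = (1 + (μ - 1) * m * h * s ^ (μ - 1)) ^ (1 / (μ - 1)))
    (hΔ : Δ + m * h * Δ ^ μ = s / K) (hrΔ : r < Δ)
    (hxc : ContinuousOn x (Icc 0 h)) (hxd : ∀ t ∈ Ioo 0 h, HasDerivAt x (x' t) t)
    (hx0 : ‖x 0‖ ≤ r) (hx' : ∀ t ∈ Ioo 0 h, ‖x' t‖ ≤ m * (‖x t‖ ^ μ + r ^ μ)) :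
    ∀ t ∈ Icc 0 h, ‖x t‖ ≤ K * (r + m * h * r ^ μ) := by
  intro t ht
  have hh : 0 ≤ h := ht.1.trans ht.2
  have hr : 0 ≤ r := (norm_nonneg _).trans hx0
  have hμ0 : 0 < μ := one_pos.trans hμ
  have hK0 : 0 < K := hK ▸ rpow_pos_of_pos (by have := sub_pos.2 hμ; positivity) _
  have hbound : ∀ ρ ∈ Ioo r Δ, ‖x t‖ ≤ K * (ρ + m * h * ρ ^ μ) := by
    rintro ρ ⟨hrρ, hρΔ⟩
    have hρ : 0 < ρ := hr.trans_lt hrρ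
    have hρΔμ : ρ ^ μ < Δ ^ μ := rpow_lt_rpow hρ.le hρΔ hμ0
    have haK : (ρ + m * h * ρ ^ μ) * K ≤ s := by
      rw [← le_div_iff₀ hK0, ← hΔ]
      nlinarith [mul_le_mul_of_nonneg_left hρΔμ.le (mul_nonneg hm.le hh)]
    obtain ⟨hblow, hvK⟩ :=
      blowupSolution_le_of_mul_le hμ hm.le hh (by positivity) hs (hK ▸ haK)
    exact (norm_le_blowupSolution_of_norm_deriv_le hμ hm hrρ hblow hxc hxd hx0 hx' t ht).trans
      (hK ▸ hvK)
  have hcont : ContinuousAt (fun ρ => K * (ρ + m * h * ρ ^ μ)) r := by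
    have := continuousAt_rpow_const r μ (Or.inr hμ0.le)
    fun_prop
  exact ge_of_tendsto (hcont.tendsto.mono_left nhdsWithin_le_nhds)
    (eventually_of_mem (Ioo_mem_nhdsGT hrΔ) hbound)

end

theorem bound_on_first_interval_general
    {n : ℕ}
    (h μ : ℝ) (hh : 0 < h) (hμ : 1 < μ)
    (f : EuclideanSpace ℝ (Fin n) × EuclideanSpace ℝ (Fin n) → EuclideanSpace ℝ (Fin n))
    (m : ℝ) (hm : 0 < m)
    (hfb : ∀ x y : EuclideanSpace ℝ (Fin n), ‖f (x, y)‖ ≤ m * (‖x‖ ^ μ + ‖y‖ ^ μ))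
    (s K Δ : ℝ) (hs : 0 < s)
    (hK : K = (1 + (μ - 1) * m * h * s ^ (μ - 1)) ^ (1 / (μ - 1)))
    (hΔ : Δ + m * h * Δ ^ μ = s / K)
    (φ x : ℝ → EuclideanSpace ℝ (Fin n)) (N : ℝ)
    (hφc : ContinuousOn φ (Set.Icc (-h) 0))
    (hxc : ContinuousOn x (Set.Ici (-h)))
    (hxφ : ∀ θ ∈ Set.Icc (-h) (0:ℝ), x θ = φ θ)
    (hxd : ∀ t > (0:ℝ), HasDerivAt x (f (x t, x (t - h))) t)
    (hN : N = ⨆ θ : Set.Icc (-h) (0:ℝ), ‖φ θ.1‖)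
    (hφΔ : N < Δ) :
    ∀ t ∈ Set.Icc (0:ℝ) h, ‖x t‖ ≤ K * (N + m * h * N ^ μ) := by
  have hbdd : BddAbove (range fun θ : Icc (-h) (0:ℝ) => ‖φ θ‖) :=
    (isCompact_Icc.bddAbove_image hφc.norm).mono (by rintro _ ⟨θ, rfl⟩; exact ⟨θ, θ.2, rfl⟩)
  have hxN : ∀ θ ∈ Icc (-h) 0, ‖x θ‖ ≤ N := fun θ hθ =>
    hxφ θ hθ ▸ hN ▸ le_ciSup hbdd ⟨θ, hθ⟩
  refine norm_le_mul_of_norm_deriv_le hμ hm hs hK hΔ hφΔ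
    (hxc.mono fun t ht => show -h ≤ t by linarith [ht.1]) (fun t ht => hxd t ht.1)
    (hxN 0 ⟨by linarith, le_rfl⟩) fun t ht => (hfb _ _).trans ?_
  have hdelay := hxN (t - h) ⟨by linarith [ht.1], by linarith [ht.2]⟩
  gcongr

/-- Lemma 7: a priori bound `‖x(t)‖ ≤ K(‖φ‖_h + mh‖φ‖_h^μ)` on the first delay interval
`[0, h]` for solutions with `‖φ‖_h < Δ`. -/
theorem bound_on_first_interval
    {n : ℕ} (hn : 1 ≤ n)
    (h μ : ℝ) (hh : 0 < h) (hμ : 1 < μ)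
    (f : EuclideanSpace ℝ (Fin n) × EuclideanSpace ℝ (Fin n) → EuclideanSpace ℝ (Fin n))
    (hf : Continuous f)
    (m : ℝ) (hm : 0 < m)
    (hfb : ∀ x y : EuclideanSpace ℝ (Fin n), ‖f (x, y)‖ ≤ m * (‖x‖ ^ μ + ‖y‖ ^ μ))
    (s K Δ : ℝ) (hs : 0 < s)
    (hK : K = (1 + (μ - 1) * m * h * s ^ (μ - 1)) ^ (1 / (μ - 1)))
    (hΔpos : 0 < Δ) (hΔ : Δ + m * h * Δ ^ μ = s / K)
    (φ x : ℝ → EuclideanSpace ℝ (Fin n)) (N : ℝ)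
    (hφc : ContinuousOn φ (Set.Icc (-h) 0))
    (hxc : ContinuousOn x (Set.Ici (-h)))
    (hxφ : ∀ θ ∈ Set.Icc (-h) (0:ℝ), x θ = φ θ)
    (hxd : ∀ t > (0:ℝ), HasDerivAt x (f (x t, x (t - h))) t)
    (hN : N = ⨆ θ : Set.Icc (-h) (0:ℝ), ‖φ θ.1‖)
    (hφΔ : N < Δ) :
    ∀ t ∈ Set.Icc (0:ℝ) h, ‖x t‖ ≤ K * (N + m * h * N ^ μ) :=
  bound_on_first_interval_general h μ hh hμ f m hm hfb s K Δ hs hK hΔ φ x N hφc hxc hxφ hxd hN hφΔ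
end
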